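/- arXiv:1512.08479 — 3 statements merged into one kernel-verified Lean document; each statement's English description precedes it below -/
import Mathlib

section
/- Let Γ be a locally finite connected graph with automorphism group G, and for vertices x, y let G_x denote the stabilizer of x. Then the ratio Δ(x,y) = |G_x·y| / |G_y·x| (cardinality of the orbit of y under G_x divided by cardinality of the orbit of x under G_y) satisfies the multiplicative cocycle identity: Δ(x,y)·Δ(y,z) = Δ(x,z) for all vertices x, y, z. -/
/-- The orbit of the vertex `y` under the stabilizer of the vertex `x`
in the automorphism group of the graph `Γ`. -/
def stabOrbit {V : Type*} (Γ : SimpleGraph V) (x y : V) : Set V :=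
  {z | ∃ g : Γ ≃g Γ, g x = x ∧ g y = z}

/-- The modular cocycle `Δ_Γ(x,y) = |G_x·y| / |G_y·x|` of a graph `Γ`. -/
noncomputable def modularCocycle {V : Type*} (Γ : SimpleGraph V) (x y : V) : ℝ :=
  (Nat.card (stabOrbit Γ x y) : ℝ) / (Nat.card (stabOrbit Γ y x) : ℝ)

/-! By orbit–stabilizer, `Δ(x,y) = [G_x : G_x ∩ G_y] / [G_y : G_x ∩ G_y]`. Measuring both indices
against the smaller subgroup `D = G_x ∩ G_y ∩ G_z` gives `Δ(x,y) = [G_x : D] / [G_y : D]`, and the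
cocycle identity telescopes. The indices are finite because an automorphism fixing `x` maps a walk
from `x` to `y` onto a walk from `x` of the same length, and in a locally finite graph only finitely
many vertices are reached by walks of a given length from `x`. -/

open MulAction

namespace Subgroup

variable {G : Type*} [Group G] {K : Type*} [Semifield K] [CharZero K]

theorem relIndex_div_relIndex_eq_of_le {A B D : Subgroup G} (hDA : D ≤ A) (hDB : D ≤ B)
    (hD : D.relIndex A ≠ 0) :
    (B.relIndex A : K) / A.relIndex B = D.relIndex A / D.relIndex B := by
  have hA : D.relIndex (A ⊓ B) * B.relIndex A = D.relIndex A := by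
    rw [← inf_relIndex_left A B]
    exact relIndex_mul_relIndex D (A ⊓ B) A (le_inf hDA hDB) inf_le_left
  have hB : D.relIndex (A ⊓ B) * A.relIndex B = D.relIndex B := by
    rw [← inf_relIndex_right A B]
    exact relIndex_mul_relIndex D (A ⊓ B) B (le_inf hDA hDB) inf_le_right
  have hDAB : (D.relIndex (A ⊓ B) : K) ≠ 0 := by
    exact_mod_cast left_ne_zero_of_mul (hA ▸ hD)
  rw [← hA, ← hB, Nat.cast_mul, Nat.cast_mul, mul_div_mul_left _ _ hDAB]

theorem Commensurable.relIndex_div_mul_relIndex_div {A B C : Subgroup G}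
    (hAB : Commensurable A B) (hBC : Commensurable B C) :
    (B.relIndex A : K) / A.relIndex B * (C.relIndex B / B.relIndex C) =
      C.relIndex A / A.relIndex C := by
  have hAC := hAB.trans hBC
  set D := A ⊓ B ⊓ C
  have hDA : D ≤ A := inf_le_left.trans inf_le_left
  have hDB : D ≤ B := inf_le_left.trans inf_le_right
  have hDC : D ≤ C := inf_le_right
  have hA : D.relIndex A ≠ 0 :=
    relIndex_inf_ne_zero (relIndex_inf_ne_zero (by simp) hAB.2) hAC.2
  have hB : D.relIndex B ≠ 0 :=
    relIndex_inf_ne_zero (relIndex_inf_ne_zero hAB.1 (by simp)) hBC.2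
  rw [relIndex_div_relIndex_eq_of_le hDA hDB hA, relIndex_div_relIndex_eq_of_le hDB hDC hB,
    relIndex_div_relIndex_eq_of_le hDA hDC hA]
  exact div_mul_div_cancel₀ (Nat.cast_ne_zero.mpr hB)

end Subgroup

namespace MulAction

variable {G X : Type*} [Group G] [MulAction G X]

theorem card_orbit_stabilizer (x y : X) :
    Nat.card (orbit (stabilizer G x) y) = (stabilizer G y).relIndex (stabilizer G x) := by
  rw [Nat.card_congr (orbitEquivQuotientStabilizer (stabilizer G x) y)]
  rfl

theorem commensurable_stabilizer {x y : X} (hxy : (orbit (stabilizer G x) y).Finite)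
    (hyx : (orbit (stabilizer G y) x).Finite) :
    (stabilizer G x).Commensurable (stabilizer G y) := by
  rw [Subgroup.Commensurable, ← card_orbit_stabilizer, ← card_orbit_stabilizer]
  exact ⟨Nat.card_ne_zero.mpr ⟨⟨x, mem_orbit_self x⟩, hyx.to_subtype⟩,
    Nat.card_ne_zero.mpr ⟨⟨y, mem_orbit_self y⟩, hxy.to_subtype⟩⟩

end MulAction

theorem SimpleGraph.finite_setOf_exists_walk_length_eq {V : Type*} (Γ : SimpleGraph V)
    [Γ.LocallyFinite] (n : ℕ) (x : V) : {z | ∃ p : Γ.Walk x z, p.length = n}.Finite := by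
  induction n generalizing x with
  | zero =>
    refine (Set.finite_singleton x).subset ?_
    rintro z ⟨p, hp⟩
    exact (Walk.eq_of_length_eq_zero hp).symm
  | succ n ih =>
    refine ((Γ.neighborSet x).toFinite.biUnion fun w _ => ih w).subset ?_
    rintro z ⟨p, hp⟩
    cases p with
    | nil => simp at hp
    | cons hxw p => exact Set.mem_biUnion hxw ⟨p, by simpa using hp⟩

section StabOrbit

variable {V : Type*} {Γ : SimpleGraph V}

theorem stabOrbit_eq_orbit (x y : V) :
    stabOrbit Γ x y = orbit (stabilizer (Γ ≃g Γ) x) y := by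
  ext z
  constructor
  · rintro ⟨g, hg, rfl⟩
    exact ⟨⟨g, hg⟩, rfl⟩
  · rintro ⟨⟨g, hg⟩, rfl⟩
    exact ⟨g, hg, rfl⟩

theorem finite_stabOrbit [Γ.LocallyFinite] {x y : V} (h : Γ.Reachable x y) :
    (stabOrbit Γ x y).Finite := by
  obtain ⟨p⟩ := h
  refine (Γ.finite_setOf_exists_walk_length_eq p.length x).subset ?_
  rintro z ⟨g, hgx, rfl⟩
  exact ⟨(p.map g.toHom).copy hgx rfl, by simp⟩

theorem commensurable_stabilizer_of_reachable [Γ.LocallyFinite] {x y : V}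
    (h : Γ.Reachable x y) :
    (stabilizer (Γ ≃g Γ) x).Commensurable (stabilizer (Γ ≃g Γ) y) := by
  have hxy := finite_stabOrbit h
  have hyx := finite_stabOrbit h.symm
  rw [stabOrbit_eq_orbit] at hxy hyx
  exact commensurable_stabilizer hxy hyx

theorem modularCocycle_eq_relIndex_div_relIndex (x y : V) :
    modularCocycle Γ x y =
      ((stabilizer (Γ ≃g Γ) y).relIndex (stabilizer (Γ ≃g Γ) x) : ℝ) /
        (stabilizer (Γ ≃g Γ) x).relIndex (stabilizer (Γ ≃g Γ) y) := by
  rw [modularCocycle, stabOrbit_eq_orbit, stabOrbit_eq_orbit, card_orbit_stabilizer,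
    card_orbit_stabilizer]

end StabOrbit

/-- For a locally finite connected graph `Γ`, the modular cocycle
`Δ(x,y) = |G_x·y|/|G_y·x|` satisfies the multiplicative cocycle identity. -/
theorem modularCocycle_mul {V : Type*} (Γ : SimpleGraph V)
    [∀ v, Fintype (Γ.neighborSet v)] (hconn : Γ.Connected) :
    ∀ x y z : V, modularCocycle Γ x y * modularCocycle Γ y z = modularCocycle Γ x z := by
  intro x y z
  simp only [modularCocycle_eq_relIndex_div_relIndex]
  exact (commensurable_stabilizer_of_reachable (hconn x y)).relIndex_div_mul_relIndex_div
    (commensurable_stabilizer_of_reachable (hconn y z))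
end

section
/- Let G be a locally compact group with left Haar measure m, acting continuously on a locally finite connected graph Γ by automorphisms with compact open stabilizers of positive finite Haar measure. Then the modular cocycle satisfies Δ(x,y) = m(G_x)/m(G_y) for all vertices x, y, where Δ(x,y) = card(G_x·y)/card(G_y·x). -/
/-!
Both sides equal `[G_x : G_x ∩ G_y] / [G_y : G_x ∩ G_y]`. By the orbit–stabilizer
theorem `card (G_x • y) = [G_x : G_x ∩ G_y]`, and since `G_x` is compact and `G_x ∩ G_y` open, `G_x`
is a disjoint union of `[G_x : G_x ∩ G_y]` left translates of `G_x ∩ G_y`, so left invariance gives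
`m G_x = [G_x : G_x ∩ G_y] * m (G_x ∩ G_y)`; symmetrically for `G_y`. The common factor
`m (G_x ∩ G_y)` is positive (open) and finite (compact) and cancels.
-/

open MulAction MeasureTheory
open scoped ENNReal

instance Subgroup.instMeasurableMul {G : Type*} [Group G] [MeasurableSpace G] [MeasurableMul G]
    (K : Subgroup G) : MeasurableMul K where
  measurable_const_mul c := ((measurable_const_mul (c : G)).comp measurable_subtype_coe).subtype_mk
  measurable_mul_const c := ((measurable_mul_const (c : G)).comp measurable_subtype_coe).subtype_mk

theorem Subgroup.finiteIndex_subgroupOf_of_isOpen_of_isCompact {G : Type*} [Group G]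
    [TopologicalSpace G] [IsTopologicalGroup G] {H K : Subgroup G}
    (hH : IsOpen (H : Set G)) (hK : IsCompact (K : Set G)) : (H.subgroupOf K).FiniteIndex :=
  have : CompactSpace K := isCompact_iff_compactSpace.mp hK
  have := (H.subgroupOf K).quotient_finite_of_isOpen (K.subgroupOf_isOpen H hH)
  Subgroup.finiteIndex_of_finite_quotient

theorem Subgroup.relIndex_mul_measure_inter {G : Type*} [Group G] [MeasurableSpace G]
    [MeasurableMul G] {H K : Subgroup G} [(H.subgroupOf K).FiniteIndex]
    (hH : MeasurableSet (H : Set G)) (hK : MeasurableSet (K : Set G))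
    (μ : Measure G) [μ.IsMulLeftInvariant] :
    H.relIndex K * μ (H ∩ K : Set G) = μ K := by
  have hemb : MeasurableEmbedding K.subtype := MeasurableEmbedding.subtype_coe hK
  have := Measure.IsMulLeftInvariant.comap μ hemb
  have key := (H.subgroupOf K).index_mul_measure (measurable_subtype_coe hH) (μ.comap K.subtype)
  rwa [hemb.comap_apply, hemb.comap_apply, Set.image_univ, ← Subgroup.coe_map,
    Subgroup.subgroupOf_map_subtype, K.coe_subtype, Subtype.range_coe] at key

theorem MulAction.relIndex_stabilizer {G X : Type*} [Group G] [MulAction G X] (x y : X) :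
    (stabilizer G y).relIndex (stabilizer G x) = Nat.card (orbit (stabilizer G x) y) := by
  rw [Subgroup.relIndex, Nat.card_coe_set_eq, ← index_stabilizer]
  rfl

theorem modularCocycle_eq_haar_ratio_general {G V : Type*} [Group G] [TopologicalSpace G]
    [IsTopologicalGroup G] [MeasurableSpace G] [BorelSpace G]
    (m : Measure G) [m.IsHaarMeasure]
    [MulAction G V]
    (hcompact : ∀ x : V, IsCompact (MulAction.stabilizer G x : Set G))
    (hopen : ∀ x : V, IsOpen (MulAction.stabilizer G x : Set G))
    (x y : V) :
    (Nat.card (MulAction.orbit (MulAction.stabilizer G x) y) : ℝ≥0∞) /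
        (Nat.card (MulAction.orbit (MulAction.stabilizer G y) x) : ℝ≥0∞) =
      m (MulAction.stabilizer G x : Set G) / m (MulAction.stabilizer G y : Set G) := by
  have := Subgroup.finiteIndex_subgroupOf_of_isOpen_of_isCompact (hopen y) (hcompact x)
  have := Subgroup.finiteIndex_subgroupOf_of_isOpen_of_isCompact (hopen x) (hcompact y)
  have hmx := Subgroup.relIndex_mul_measure_inter (hopen y).measurableSet (hopen x).measurableSet m
  have hmy := Subgroup.relIndex_mul_measure_inter (hopen x).measurableSet (hopen y).measurableSet m
  rw [relIndex_stabilizer, Set.inter_comm] at hmx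
  rw [relIndex_stabilizer] at hmy
  have hpos : m (stabilizer G x ∩ stabilizer G y : Set G) ≠ 0 :=
    ((hopen x).inter (hopen y)).measure_ne_zero m ⟨1, one_mem _, one_mem _⟩
  have hfin : m (stabilizer G x ∩ stabilizer G y : Set G) ≠ ⊤ :=
    ((measure_mono Set.inter_subset_left).trans_lt (hcompact x).measure_lt_top).ne
  rw [← hmx, ← hmy, ENNReal.mul_div_mul_right _ _ hpos hfin]

/-- For a locally compact group `G` with left Haar measure `m` acting continuously on a
locally finite connected graph `Γ` by automorphisms, with compact open stabilizers of
positive finite Haar measure, the modular cocycle satisfies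
`Δ(x,y) = card(G_x·y)/card(G_y·x) = m(G_x)/m(G_y)`. -/
theorem modularCocycle_eq_haar_ratio {G V : Type*} [Group G] [TopologicalSpace G]
    [IsTopologicalGroup G] [LocallyCompactSpace G] [MeasurableSpace G] [BorelSpace G]
    (m : Measure G) [m.IsHaarMeasure]
    (Γ : SimpleGraph V) [∀ v, Fintype (Γ.neighborSet v)] (hconn : Γ.Connected)
    [MulAction G V] [TopologicalSpace V] [DiscreteTopology V]
    (hcont : ∀ x : V, Continuous fun g : G => g • x)
    (haut : ∀ (g : G) (x y : V), Γ.Adj (g • x) (g • y) ↔ Γ.Adj x y)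
    (hcompact : ∀ x : V, IsCompact (MulAction.stabilizer G x : Set G))
    (hopen : ∀ x : V, IsOpen (MulAction.stabilizer G x : Set G))
    (hpos : ∀ x : V, 0 < m (MulAction.stabilizer G x : Set G))
    (hfin : ∀ x : V, m (MulAction.stabilizer G x : Set G) < ⊤)
    (x y : V) :
    (Nat.card (MulAction.orbit (MulAction.stabilizer G x) y) : ℝ≥0∞) /
        (Nat.card (MulAction.orbit (MulAction.stabilizer G y) x) : ℝ≥0∞) =
      m (MulAction.stabilizer G x : Set G) / m (MulAction.stabilizer G y : Set G) :=
  modularCocycle_eq_haar_ratio_general m hcompact hopen x y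
end

section
/- For a vertex-transitive locally finite connected graph Γ with automorphism group G, and a fixed vertex x, the function g ↦ Δ(x, gx) on G equals the modular function of G, where Δ is the modular cocycle. In particular, G is unimodular if and only if Δ(x, gx) = 1 for all g ∈ G. -/
open MulAction MeasureTheory
open scoped ENNReal Pointwise

/-!
Put `K = G_x` and `L = G_{gx} = g K g⁻¹`. Both are compact open, so `K ⊓ L` is open of finite
index in each, and left invariance gives `m K = [K : K ⊓ L] · m (K ⊓ L)` and likewise for `L`.
By orbit–stabilizer these indices are `|K • gx|` and `|L • x|`, so `Δ(x, gx) = m K / m L`;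
finally `K = (g⁻¹ • L) * g`, whence `m K = ΔG g · m L`.
-/

namespace Subgroup

variable {G : Type*} [Group G]

theorem isFiniteRelIndex_of_isOpen_of_isCompact [TopologicalSpace G] [IsTopologicalGroup G]
    {H K : Subgroup G} (hH : IsOpen (H : Set G)) (hK : IsCompact (K : Set G)) :
    H.IsFiniteRelIndex K := by
  have : CompactSpace K := isCompact_iff_compactSpace.mp hK
  have := (H.subgroupOf K).quotient_finite_of_isOpen (hH.preimage continuous_subtype_val)
  rw [isFiniteRelIndex_iff_finiteIndex]
  exact finiteIndex_of_finite_quotient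

instance measurableMul [MeasurableSpace G] [MeasurableMul G] (K : Subgroup G) :
    MeasurableMul K where
  measurable_const_mul c :=
    ((measurable_const_mul (c : G)).comp measurable_subtype_coe).subtype_mk
  measurable_mul_const c :=
    ((measurable_mul_const (c : G)).comp measurable_subtype_coe).subtype_mk

theorem relIndex_mul_measure [MeasurableSpace G] [MeasurableMul G] {H K : Subgroup G}
    [H.IsFiniteRelIndex K] (hHK : H ≤ K) (hH : MeasurableSet (H : Set G))
    (hK : MeasurableSet (K : Set G)) (μ : Measure G) [μ.IsMulLeftInvariant] :
    H.relIndex K * μ H = μ K := by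
  have hemb : MeasurableEmbedding K.subtype := MeasurableEmbedding.subtype_coe hK
  have := Measure.IsMulLeftInvariant.comap μ hemb
  have h := (H.subgroupOf K).index_mul_measure (hH.preimage measurable_subtype_coe)
    (μ.comap K.subtype)
  rwa [hemb.comap_apply, hemb.comap_apply, Set.image_univ, coe_subgroupOf,
    Set.image_preimage_eq_of_subset (by simpa using hHK), coe_subtype, Subtype.range_coe] at h

theorem relIndex_div_relIndex_eq_measure_div_measure [TopologicalSpace G] [IsTopologicalGroup G]
    [MeasurableSpace G] [BorelSpace G] (μ : Measure G) [μ.IsHaarMeasure] {K L : Subgroup G}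
    (hKo : IsOpen (K : Set G)) (hKc : IsCompact (K : Set G))
    (hLo : IsOpen (L : Set G)) (hLc : IsCompact (L : Set G)) :
    (L.relIndex K : ℝ≥0∞) / K.relIndex L = μ K / μ L := by
  have hHo : IsOpen ((K ⊓ L : Subgroup G) : Set G) := hKo.inter hLo
  have := isFiniteRelIndex_of_isOpen_of_isCompact hHo hKc
  have := isFiniteRelIndex_of_isOpen_of_isCompact hHo hLc
  have hH0 : μ (K ⊓ L : Subgroup G) ≠ 0 := (hHo.measure_pos μ ⟨1, one_mem _⟩).ne'
  have hHtop : μ (K ⊓ L : Subgroup G) ≠ ⊤ :=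
    (measure_mono Set.inter_subset_left).trans_lt hKc.measure_lt_top |>.ne
  rw [← relIndex_mul_measure inf_le_left hHo.measurableSet hKo.measurableSet,
    ← relIndex_mul_measure inf_le_right hHo.measurableSet hLo.measurableSet,
    ENNReal.mul_div_mul_right _ _ hH0 hHtop, inf_relIndex_left, inf_relIndex_right]

end Subgroup

namespace MulAction

variable {G V : Type*} [Group G] [MulAction G V]

theorem natCard_orbit_eq_relIndex (K : Subgroup G) (v : V) :
    Nat.card (orbit K v) = (stabilizer G v).relIndex K := by
  rw [Subgroup.relIndex, show (stabilizer G v).subgroupOf K = stabilizer K v from rfl,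
    index_stabilizer, Nat.card_coe_set_eq]

theorem stabilizer_eq_image_mul_right_smul_stabilizer_smul (g : G) (v : V) :
    (stabilizer G v : Set G) = (· * g) '' (g⁻¹ • (stabilizer G (g • v) : Set G)) := by
  ext a
  simp [Set.mem_smul_set_iff_inv_smul_mem, mul_smul]

end MulAction

theorem modularCocycle_eq_modularFunction_general {G V : Type*} [Group G] [TopologicalSpace G]
    [IsTopologicalGroup G] [MeasurableSpace G] [BorelSpace G]
    (m : Measure G) [m.IsHaarMeasure]
    [MulAction G V]
    (hcompact : ∀ x : V, IsCompact (MulAction.stabilizer G x : Set G))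
    (hopen : ∀ x : V, IsOpen (MulAction.stabilizer G x : Set G))
    (ΔG : G → ℝ≥0∞)
    (hΔG : ∀ (g : G) (A : Set G), MeasurableSet A →
      m ((fun a => a * g) '' A) = ΔG g * m A)
    (x : V) :
    (∀ g : G,
      (Nat.card (MulAction.orbit (MulAction.stabilizer G x) (g • x)) : ℝ≥0∞) /
          (Nat.card (MulAction.orbit (MulAction.stabilizer G (g • x)) x) : ℝ≥0∞) =
        ΔG g) ∧
    ((∀ g : G, ΔG g = 1) ↔
      ∀ g : G,
        (Nat.card (MulAction.orbit (MulAction.stabilizer G x) (g • x)) : ℝ≥0∞) /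
            (Nat.card (MulAction.orbit (MulAction.stabilizer G (g • x)) x) : ℝ≥0∞) =
          1) := by
  have cocycle_eq (g : G) :
      (Nat.card (orbit (stabilizer G x) (g • x)) : ℝ≥0∞) /
        Nat.card (orbit (stabilizer G (g • x)) x) = ΔG g := by
    have hmeasure : m (stabilizer G x) = ΔG g * m (stabilizer G (g • x)) := by
      rw [stabilizer_eq_image_mul_right_smul_stabilizer_smul g x,
        hΔG g _ ((hopen _).smul g⁻¹).measurableSet, measure_smul]
    rw [natCard_orbit_eq_relIndex, natCard_orbit_eq_relIndex,
      Subgroup.relIndex_div_relIndex_eq_measure_div_measure m (hopen x) (hcompact x)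
        (hopen (g • x)) (hcompact (g • x)), hmeasure,
      ENNReal.mul_div_cancel_right ((hopen _).measure_pos m ⟨1, one_mem _⟩).ne'
        (hcompact _).measure_lt_top.ne]
  exact ⟨cocycle_eq, by simp only [cocycle_eq]⟩

/-- For a vertex-transitive locally finite connected graph with automorphism group `G`
(a locally compact group, with left Haar measure `m` and compact open stabilizers),
and a fixed vertex `x`, the function `g ↦ Δ(x, gx)` (where
`Δ(x,y) = card(G_x·y)/card(G_y·x)` is the modular cocycle) equals the modular function
`ΔG` of `G` (characterized by `m(Ag) = ΔG(g)·m(A)`).  In particular `G` is unimodular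
iff `Δ(x, gx) = 1` for all `g`. -/
theorem modularCocycle_eq_modularFunction {G V : Type*} [Group G] [TopologicalSpace G]
    [IsTopologicalGroup G] [LocallyCompactSpace G] [MeasurableSpace G] [BorelSpace G]
    (m : Measure G) [m.IsHaarMeasure]
    (Γ : SimpleGraph V) [∀ v, Fintype (Γ.neighborSet v)] (hconn : Γ.Connected)
    [MulAction G V]
    (haut : ∀ (g : G) (x y : V), Γ.Adj (g • x) (g • y) ↔ Γ.Adj x y)
    (htrans : ∀ x y : V, ∃ g : G, g • x = y)
    (hcompact : ∀ x : V, IsCompact (MulAction.stabilizer G x : Set G))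
    (hopen : ∀ x : V, IsOpen (MulAction.stabilizer G x : Set G))
    (hpos : ∀ x : V, 0 < m (MulAction.stabilizer G x : Set G))
    (hfin : ∀ x : V, m (MulAction.stabilizer G x : Set G) < ⊤)
    (ΔG : G → ℝ≥0∞)
    (hΔG : ∀ (g : G) (A : Set G), MeasurableSet A →
      m ((fun a => a * g) '' A) = ΔG g * m A)
    (x : V) :
    (∀ g : G,
      (Nat.card (MulAction.orbit (MulAction.stabilizer G x) (g • x)) : ℝ≥0∞) /
          (Nat.card (MulAction.orbit (MulAction.stabilizer G (g • x)) x) : ℝ≥0∞) =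
        ΔG g) ∧
    ((∀ g : G, ΔG g = 1) ↔
      ∀ g : G,
        (Nat.card (MulAction.orbit (MulAction.stabilizer G x) (g • x)) : ℝ≥0∞) /
            (Nat.card (MulAction.orbit (MulAction.stabilizer G (g • x)) x) : ℝ≥0∞) =
          1) :=
  modularCocycle_eq_modularFunction_general m hcompact hopen ΔG hΔG x
end
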